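/- Loop-invariant base case, opposite direction: If v1 ≥ 0, v2 ≤ 0, and safeDist_o(v1, v2) ≤ x2 − x1, then the opposite-direction loop invariant holds in its stopping-distance part: x1 + v1²/(2·a_minBrake) ≤ x2 − v2²/(2·a_minBrake). -/

import Mathlib

/-!
The speed reached after the response time, `v + ρ * a_maxAccel`, is at least `v`, so each braking
term of `safeDistO` already dominates the stopping distance `v ^ 2 / (2 * a_minBrake)`, and the
response-time terms are nonnegative.
-/

/-- RSS opposite-direction safe distance. -/
noncomputable def safeDistO (aminBrake amaxAccel ρ v1 v2 : ℝ) : ℝ :=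
  ((v1 + (v1 + ρ * amaxAccel)) / 2) * ρ + (v1 + ρ * amaxAccel)^2 / (2 * aminBrake)
  + ((|v2| + (|v2| + ρ * amaxAccel)) / 2) * ρ + (|v2| + ρ * amaxAccel)^2 / (2 * aminBrake)

lemma sq_div_le_response_add_braking {a A ρ v : ℝ} (ha : 0 ≤ a) (hA : 0 ≤ A) (hρ : 0 ≤ ρ)
    (hv : 0 ≤ v) :
    v ^ 2 / (2 * a) ≤ ((v + (v + ρ * A)) / 2) * ρ + (v + ρ * A) ^ 2 / (2 * a) := by
  have hρA : 0 ≤ ρ * A := mul_nonneg hρ hA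
  calc v ^ 2 / (2 * a) ≤ (v + ρ * A) ^ 2 / (2 * a) := by gcongr; linarith
    _ ≤ ((v + (v + ρ * A)) / 2) * ρ + (v + ρ * A) ^ 2 / (2 * a) :=
      le_add_of_nonneg_left (by positivity)

lemma sq_div_add_sq_div_le_safeDistO {a A ρ v1 : ℝ} (ha : 0 ≤ a) (hA : 0 ≤ A) (hρ : 0 ≤ ρ)
    (hv1 : 0 ≤ v1) (v2 : ℝ) :
    v1 ^ 2 / (2 * a) + v2 ^ 2 / (2 * a) ≤ safeDistO a A ρ v1 v2 := by
  have h1 := sq_div_le_response_add_braking ha hA hρ hv1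
  have h2 := sq_div_le_response_add_braking ha hA hρ (abs_nonneg v2)
  rw [sq_abs] at h2
  unfold safeDistO
  linarith

theorem loop_invariant_base_opposite_general
    (aminBrake amaxAccel ρ : ℝ)
    (hmin : 0 < aminBrake)
    (hacc : 0 < amaxAccel) (hρ : 0 < ρ)
    (x1 x2 v1 v2 : ℝ)
    (hv1 : v1 ≥ 0)
    (hdist : safeDistO aminBrake amaxAccel ρ v1 v2 ≤ x2 - x1) :
    x1 + v1^2 / (2 * aminBrake) ≤ x2 - v2^2 / (2 * aminBrake) := by
  linarith [sq_div_add_sq_div_le_safeDistO hmin.le hacc.le hρ.le hv1 v2]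

/-- Loop-invariant base case, opposite direction. -/
theorem loop_invariant_base_opposite
    (aminBrake amaxBrake amaxAccel ρ : ℝ)
    (hmin : 0 < aminBrake) (hminmax : aminBrake < amaxBrake)
    (hacc : 0 < amaxAccel) (hρ : 0 < ρ)
    (x1 x2 v1 v2 : ℝ)
    (hv1 : v1 ≥ 0) (hv2 : v2 ≤ 0)
    (hdist : safeDistO aminBrake amaxAccel ρ v1 v2 ≤ x2 - x1) :
    x1 + v1^2 / (2 * aminBrake) ≤ x2 - v2^2 / (2 * aminBrake) :=
  loop_invariant_base_opposite_general aminBrake amaxAccel ρ hmin hacc hρ x1 x2 v1 v2 hv1 hdist
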